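/- Let μ be a Borel probability measure on the unit circle, β ∈ 𝕋, and set η_μ = ψ_μ/(1+ψ_μ). If lim_{r↑1} η_μ(rβ) = 1, then lim_{r↑1} (η_μ(rβ) − 1)/(r − 1) = 1/μ({1/β}), where the right-hand side is interpreted as ∞ when μ({1/β}) = 0. (This identifies the Julia–Carathéodory derivative of η_μ at β in terms of the atom of μ at 1/β.) -/

import Mathlib

open MeasureTheory Metric Complex Filter Topology

/-!
With `w = rβ` one has `1 + ψ(w) = ∫ (1 - t w)⁻¹ dμ(t)`, hence `η(w) - 1 = -(1 + ψ(w))⁻¹` and the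
difference quotient is `((1 - r) (1 + ψ(rβ)))⁻¹`. The kernels `(1 - r) / (1 - t r β)` are bounded by `1`
on the circle and converge to the indicator of `{β⁻¹}`, so by dominated convergence
`(1 - r) (1 + ψ(rβ)) → μ {β⁻¹}`. Since `Re (1 - z)⁻¹ ≥ 1/2` on the closed disc, `1 + ψ` never vanishes,
which yields both the finite limit and the blow-up when there is no atom.
-/

lemma one_half_le_re_inv_one_sub {z : ℂ} (hz : ‖z‖ ≤ 1) (hz1 : z ≠ 1) :
    1 / 2 ≤ (1 - z)⁻¹.re := by
  have hd : 1 - z ≠ 0 := sub_ne_zero.mpr hz1.symm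
  have hsq : z.re * z.re + z.im * z.im ≤ 1 := by
    rw [← normSq_apply, normSq_eq_norm_sq]; nlinarith [norm_nonneg z]
  rw [inv_re, le_div_iff₀ (normSq_pos.mpr hd), normSq_apply]
  simp only [sub_re, one_re, sub_im, one_im]
  nlinarith

lemma one_sub_norm_le_norm_one_sub_mul {t : ℂ} (ht : ‖t‖ = 1) (w : ℂ) :
    1 - ‖w‖ ≤ ‖1 - t * w‖ := by
  simpa [ht] using norm_sub_norm_le (1 : ℂ) (t * w)

lemma norm_one_sub_mul_inv_one_sub_mul_le_one {r : ℝ} (hr : r ∈ Set.Ico 0 1) {t β : ℂ}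
    (ht : ‖t‖ = 1) (hβ : ‖β‖ = 1) : ‖(1 - (r : ℂ)) * (1 - t * (r * β))⁻¹‖ ≤ 1 := by
  have hden : 1 - r ≤ ‖1 - t * (r * β)‖ := by
    simpa [hβ, abs_of_nonneg hr.1] using one_sub_norm_le_norm_one_sub_mul ht (r * β)
  have hnum : ‖1 - (r : ℂ)‖ = 1 - r := by
    rw [← ofReal_one, ← ofReal_sub, norm_real, Real.norm_of_nonneg (by linarith [hr.2])]
  rw [norm_mul, norm_inv, hnum, ← div_eq_mul_inv, div_le_one (by linarith [hr.2])]
  exact hden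

lemma tendsto_one_sub_mul_inv_one_sub_mul {β : ℂ} (hβ : β ≠ 0) (t : ℂ) :
    Tendsto (fun r : ℝ => (1 - (r : ℂ)) * (1 - t * (r * β))⁻¹) (𝓝[≠] 1)
      (𝓝 (Set.indicator {β⁻¹} (fun _ => 1) t)) := by
  by_cases htβ : t = β⁻¹
  · subst htβ
    rw [Set.indicator_of_mem (Set.mem_singleton _)]
    refine tendsto_const_nhds.congr' ?_
    filter_upwards [self_mem_nhdsWithin] with r hr
    rw [mul_comm (r : ℂ), inv_mul_cancel_left₀ hβ,
      mul_inv_cancel₀ (sub_ne_zero.mpr (by exact_mod_cast Ne.symm hr))]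
  · have hne : 1 - t * β ≠ 0 := fun h => htβ (eq_inv_of_mul_eq_one_left (sub_eq_zero.mp h).symm)
    rw [Set.indicator_of_notMem (Set.notMem_singleton_iff.mpr htβ)]
    have : ContinuousAt (fun r : ℝ => (1 - (r : ℂ)) * (1 - t * (r * β))⁻¹) 1 := by
      fun_prop (disch := simpa using hne)
    simpa using this.tendsto.mono_left nhdsWithin_le_nhds

section CircleMeasure

variable {μ : Measure ℂ} (hμ : ∀ᵐ t ∂μ, ‖t‖ = 1)
include hμ

lemma integrable_inv_one_sub_mul [IsFiniteMeasure μ] {w : ℂ} (hw : ‖w‖ < 1) :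
    Integrable (fun t => (1 - t * w)⁻¹) μ := by
  refine .of_bound (by fun_prop) (1 - ‖w‖)⁻¹ ?_
  filter_upwards [hμ] with t ht
  rw [norm_inv]
  exact inv_anti₀ (by linarith) (one_sub_norm_le_norm_one_sub_mul ht w)

lemma one_add_integral_mul_div_one_sub_mul [IsProbabilityMeasure μ] {w : ℂ} (hw : ‖w‖ < 1) :
    1 + ∫ t, t * w / (1 - t * w) ∂μ = ∫ t, (1 - t * w)⁻¹ ∂μ := by
  have hae : (fun t => t * w / (1 - t * w)) =ᵐ[μ] fun t => (1 - t * w)⁻¹ - 1 := by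
    filter_upwards [hμ] with t ht
    have : 1 - t * w ≠ 0 := fun h => by
      simpa [h] using (one_sub_norm_le_norm_one_sub_mul ht w).trans_lt' (sub_pos.mpr hw)
    field_simp
    ring
  rw [integral_congr_ae hae, integral_sub (integrable_inv_one_sub_mul hμ hw) (integrable_const 1)]
  simp

lemma one_half_le_re_integral_inv_one_sub_mul [IsProbabilityMeasure μ] {w : ℂ} (hw : ‖w‖ < 1) :
    1 / 2 ≤ (∫ t, (1 - t * w)⁻¹ ∂μ).re := by
  have hint := integrable_inv_one_sub_mul hμ hw
  have hre : ∀ᵐ t ∂μ, 1 / 2 ≤ (1 - t * w)⁻¹.re := by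
    filter_upwards [hμ] with t ht
    have : ‖t * w‖ < 1 := by rwa [norm_mul, ht, one_mul]
    exact one_half_le_re_inv_one_sub this.le (ne_of_apply_ne norm (by simpa using this.ne))
  calc 1 / 2 = ∫ _, (1 / 2 : ℝ) ∂μ := by simp
    _ ≤ ∫ t, (1 - t * w)⁻¹.re ∂μ := integral_mono_ae (integrable_const _) hint.re hre
    _ = _ := integral_re hint

lemma tendsto_one_sub_mul_integral_inv_one_sub_mul [IsFiniteMeasure μ] {β : ℂ} (hβ : ‖β‖ = 1) :
    Tendsto (fun r : ℝ => (1 - (r : ℂ)) * ∫ t, (1 - t * (r * β))⁻¹ ∂μ) (𝓝[<] 1)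
      (𝓝 (μ.real {β⁻¹})) := by
  have hβ0 : β ≠ 0 := norm_ne_zero_iff.mp (by simp [hβ])
  simp_rw [← integral_const_mul]
  have hlim : ∫ t, Set.indicator {β⁻¹} (fun _ => (1 : ℂ)) t ∂μ = μ.real {β⁻¹} := by
    rw [integral_indicator_const _ (measurableSet_singleton _), real_smul, mul_one]
  rw [← hlim]
  refine tendsto_integral_filter_of_dominated_convergence (fun _ => 1)
    (.of_forall fun r => by fun_prop) ?_ (integrable_const 1)
    (.of_forall fun t => (tendsto_one_sub_mul_inv_one_sub_mul hβ0 t).mono_left (nhdsLT_le_nhdsNE 1))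
  filter_upwards [Ico_mem_nhdsLT zero_lt_one] with r hr
  filter_upwards [hμ] with t ht
  exact norm_one_sub_mul_inv_one_sub_mul_le_one hr ht hβ

end CircleMeasure

lemma div_one_add_sub_one_div_sub_one {K : Type*} [Field K] {p x : K} (hp : 1 + p ≠ 0)
    (hx : x ≠ 1) : (p / (1 + p) - 1) / (x - 1) = ((1 - x) * (1 + p))⁻¹ := by
  have : 1 - x ≠ 0 := sub_ne_zero.mpr hx.symm
  have : x - 1 ≠ 0 := sub_ne_zero.mpr hx
  field_simp
  ring

theorem julia_caratheodory_derivative_eta_general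
    (μ : Measure ℂ) [IsProbabilityMeasure μ]
    (hμ : ∀ᵐ t ∂μ, ‖t‖ = 1)
    (ψ η : ℂ → ℂ)
    (hψ : ∀ z ∈ ball (0:ℂ) 1, ψ z = ∫ t, t * z / (1 - t * z) ∂μ)
    (hη : ∀ z ∈ ball (0:ℂ) 1, η z = ψ z / (1 + ψ z))
    (β : ℂ) (hβ : ‖β‖ = 1) :
    (μ {β⁻¹} = 0 →
      Tendsto (fun r : ℝ => ‖(η ((r : ℂ) * β) - 1) / ((r : ℂ) - 1)‖)
        (𝓝[<] (1:ℝ)) atTop) ∧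
    (μ {β⁻¹} ≠ 0 →
      Tendsto (fun r : ℝ => (η ((r : ℂ) * β) - 1) / ((r : ℂ) - 1))
        (𝓝[<] (1:ℝ)) (𝓝 ((1 / (μ {β⁻¹}).toReal : ℝ) : ℂ))) := by
  set F : ℝ → ℂ := fun r => (1 - (r : ℂ)) * ∫ t, (1 - t * (r * β))⁻¹ ∂μ
  have hquot : ∀ᶠ r : ℝ in 𝓝[<] 1,
      (η (r * β) - 1) / ((r : ℂ) - 1) = (F r)⁻¹ ∧ F r ≠ 0 := by
    filter_upwards [Ioo_mem_nhdsLT zero_lt_one] with r hr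
    have hball : (r : ℂ) * β ∈ ball (0 : ℂ) 1 := by simp [hβ, abs_of_pos hr.1, hr.2]
    have hS := one_add_integral_mul_div_one_sub_mul hμ (mem_ball_zero_iff.mp hball)
    have hS0 : ∫ t, (1 - t * (r * β))⁻¹ ∂μ ≠ 0 := fun h => by
      have := one_half_le_re_integral_inv_one_sub_mul hμ (mem_ball_zero_iff.mp hball)
      norm_num [h] at this
    have hr1 : (r : ℂ) ≠ 1 := by exact_mod_cast hr.2.ne
    rw [← hψ _ hball] at hS
    refine ⟨?_, mul_ne_zero (sub_ne_zero.mpr hr1.symm) hS0⟩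
    rw [hη _ hball, div_one_add_sub_one_div_sub_one (hS ▸ hS0) hr1, hS]
  have hF := tendsto_one_sub_mul_integral_inv_one_sub_mul hμ hβ
  refine ⟨fun h0 => ?_, fun h0 => ?_⟩
  · rw [measureReal_def, h0, ENNReal.toReal_zero, ofReal_zero] at hF
    have hF' : Tendsto F (𝓝[<] 1) (𝓝[≠] 0) :=
      tendsto_nhdsWithin_iff.mpr ⟨hF, hquot.mono fun r hr => hr.2⟩
    refine (tendsto_norm_inv_nhdsNE_zero_atTop.comp hF').congr' ?_
    filter_upwards [hquot] with r hr
    simp [hr.1]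
  · have hc : (μ.real {β⁻¹} : ℂ) ≠ 0 := by
      exact_mod_cast ENNReal.toReal_ne_zero.mpr ⟨h0, measure_ne_top μ _⟩
    have hlimit : ((1 / (μ {β⁻¹}).toReal : ℝ) : ℂ) = (μ.real {β⁻¹} : ℂ)⁻¹ := by
      simp [measureReal_def]
    rw [hlimit]
    refine (hF.inv₀ hc).congr' ?_
    filter_upwards [hquot] with r hr
    exact hr.1.symm

theorem julia_caratheodory_derivative_eta
    (μ : Measure ℂ) [IsProbabilityMeasure μ]
    (hμ : ∀ᵐ t ∂μ, ‖t‖ = 1)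
    (ψ η : ℂ → ℂ)
    (hψ : ∀ z ∈ ball (0:ℂ) 1, ψ z = ∫ t, t * z / (1 - t * z) ∂μ)
    (hη : ∀ z ∈ ball (0:ℂ) 1, η z = ψ z / (1 + ψ z))
    (β : ℂ) (hβ : ‖β‖ = 1)
    (hlim : Tendsto (fun r : ℝ => η ((r : ℂ) * β)) (𝓝[<] (1:ℝ)) (𝓝 1)) :
    (μ {β⁻¹} = 0 →
      Tendsto (fun r : ℝ => ‖(η ((r : ℂ) * β) - 1) / ((r : ℂ) - 1)‖)
        (𝓝[<] (1:ℝ)) atTop) ∧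
    (μ {β⁻¹} ≠ 0 →
      Tendsto (fun r : ℝ => (η ((r : ℂ) * β) - 1) / ((r : ℂ) - 1))
        (𝓝[<] (1:ℝ)) (𝓝 ((1 / (μ {β⁻¹}).toReal : ℝ) : ℂ))) :=
  julia_caratheodory_derivative_eta_general μ hμ ψ η hψ hη β hβ
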